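/- Let B be a skew brace such that B³ = 0, with (B,+) nilpotent of class m and (B²,+) nilpotent of class r. Let Z_n(B²,+) be the n-th term of the upper central series of (B²,+) and set S_n = {a ∈ B² : a∗b ∈ Z_n(B²,+) for all b ∈ B}. Then B^{(2+m·k)} ⊆ S_{r−k} for every 1 ≤ k ≤ r, where B^{(n)} denotes the n-th term of the right series of B. -/

import Mathlib

/-- A (left) skew brace: a set with two group structures `(B,+)` and `(B,·)`
satisfying `a·(b+c) = a·b - a + a·c`. -/
class SkewBrace (B : Type*) extends AddGroup B, Group B where
  mul_add_compat : ∀ a b c : B, a * (b + c) = a * b - a + a * c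

namespace SkewBrace

variable {B : Type*} [SkewBrace B]

/-- The star product `a ∗ b = -a + a·b - b`. -/
def star (a b : B) : B := -a + a * b - b

/-- For subsets `X, Y ⊆ B`, `X ∗ Y` is the additive subgroup generated by
all `x ∗ y` with `x ∈ X`, `y ∈ Y`. -/
def starSet (X Y : Set B) : AddSubgroup B :=
  AddSubgroup.closure (Set.image2 star X Y)

/-- The left series, indexed so that `leftSeries B n = B^{n+1}`:
`leftSeries B 0 = B¹ = B` and `leftSeries B (n+1) = B ∗ leftSeries B n`. -/
def leftSeries (B : Type*) [SkewBrace B] : ℕ → AddSubgroup B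
  | 0 => ⊤
  | n + 1 => starSet Set.univ (leftSeries B n)

/-- The right series, indexed so that `rightSeries B n = B^{(n+1)}`:
`rightSeries B 0 = B^{(1)} = B` and `rightSeries B (n+1) = (rightSeries B n) ∗ B`. -/
def rightSeries (B : Type*) [SkewBrace B] : ℕ → AddSubgroup B
  | 0 => ⊤
  | n + 1 => starSet (rightSeries B n : Set B) Set.univ

end SkewBrace

namespace SkewBrace

/-- The `n`-th term of the upper central series of the additive group `(B²,+)`,
viewed as a subset of `B`. -/
def upperCentralSet (B : Type*) [SkewBrace B] (n : ℕ) : Set B :=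
  {x : B | ∃ hx : x ∈ leftSeries B 1,
    Multiplicative.ofAdd (⟨x, hx⟩ : ↥(leftSeries B 1)) ∈
      upperCentralSeries (Multiplicative ↥(leftSeries B 1)) n}

/-- `S_n = {a ∈ B² : a ∗ b ∈ Z_n(B²,+) for all b ∈ B}`. -/
def Sset (B : Type*) [SkewBrace B] (n : ℕ) : Set B :=
  {a : B | a ∈ leftSeries B 1 ∧ ∀ b : B, star a b ∈ upperCentralSet B n}

end SkewBrace


/-!
Write `δ_d x = x ∗ d`. Since `B³ = 0`, `δ_d` is an anti-homomorphism `(B, ·) → (B², +)`, and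
for `w ∈ B²` it sends `w ∗ e` to `δ_d (e + w - e) - δ_d w`, up to a commutator of `δ_d w` with
an element of `B²`. Suppose `B^{(p)} ⊆ S_{n+1}`, i.e. `δ_d` maps `B^{(p)}` into `Z_{n+1}(B², +)`.
Then modulo `Z_n` the star `u ∗ e` of `u ∈ B^{(p)}` has the same `δ_d` as the additive commutator
`⁅-u, e⁆`, and this agreement survives any number of further commutators with elements of `B`;
that is proved by induction on their number, together with the compatibility of the agreement
with `+` and with conjugation by `B²`. Hence `m` successive stars starting in `B^{(p)}` agree
modulo `Z_n` with `(m + 1)`-fold commutators in `(B, +)`, which vanish as `(B, +)` has class `m`: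
`B^{(p+m)} ⊆ S_n`. Starting from `B^{(2)} = B² = S_r` and iterating gives the theorem.
-/

namespace SkewBrace

variable {B : Type*} [SkewBrace B]

local infix:70 " ∗ " => star

def addConj (g x : B) : B := g + x - g

/-- `addCommutator X c = ⁅-X, c⁆` in the additive group. -/
def addCommutator (X c : B) : B := -X + addConj c X

theorem addConj_add (g x y : B) : addConj g (x + y) = addConj g x + addConj g y := by
  simp only [addConj, sub_eq_add_neg, add_assoc, neg_add_cancel_left]

theorem addConj_neg (g x : B) : addConj g (-x) = -addConj g x := by
  simp only [addConj, sub_eq_add_neg, neg_add_rev, neg_neg, add_assoc]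

theorem addCommutator_zero (c : B) : addCommutator 0 c = 0 := by
  simp [addCommutator, addConj]

theorem addCommutator_add (P Q c : B) :
    addCommutator (P + Q) c = addConj (-Q) (addCommutator P c) + addCommutator Q c := by
  simp only [addCommutator, addConj, sub_eq_add_neg, neg_add_rev, neg_neg, add_assoc,
    neg_add_cancel_left, add_neg_cancel_left]

theorem addCommutator_neg (P c : B) :
    addCommutator (-P) c = addConj P (-addCommutator P c) := by
  simp only [addCommutator, addConj, sub_eq_add_neg, neg_add_rev, neg_neg, add_assoc,
    add_neg_cancel, add_zero]

theorem addCommutator_addConj (u X c : B) :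
    addCommutator (addConj u X) c = addConj u (addCommutator X (-u + c + u)) := by
  simp only [addCommutator, addConj, sub_eq_add_neg, neg_add_rev, neg_neg, add_assoc,
    add_neg_cancel, add_zero]

theorem addCommutator_add_right (X α β : B) :
    addCommutator X (α + β) = addCommutator X α + addConj α (addCommutator X β) := by
  simp only [addCommutator, addConj, sub_eq_add_neg, neg_add_rev, add_assoc,
    neg_add_cancel_left, add_neg_cancel_left]

theorem addConj_mem {H : AddSubgroup B} (hH : H.Normal) {x : B} (hx : x ∈ H) (g : B) :
    addConj g x ∈ H := by
  simpa [addConj, sub_eq_add_neg] using hH.conj_mem x hx g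

theorem addCommutator_mem {H : AddSubgroup B} (hH : H.Normal) {X : B} (hX : X ∈ H) (c : B) :
    addCommutator X c ∈ H :=
  H.add_mem (H.neg_mem hX) (addConj_mem hH hX c)

theorem zero_eq_one : (0 : B) = 1 := by
  have h := mul_add_compat (1 : B) 0 0
  simp only [add_zero, one_mul, zero_sub] at h
  exact (neg_eq_zero.mp h.symm).symm

theorem star_zero_left (b : B) : 0 ∗ b = 0 := by
  have h : (0 : B) * b = b := by rw [zero_eq_one, one_mul]
  simp [star, h]

theorem star_zero_right (a : B) : a ∗ 0 = 0 := by
  simp [star, zero_eq_one]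

theorem mul_eq_add_star_add (a b : B) : a * b = a + a ∗ b + b := by
  simp [star, add_assoc]

theorem star_add_right (a b c : B) : a ∗ (b + c) = a ∗ b + b + a ∗ c - b := by
  simp only [star, mul_add_compat, sub_eq_add_neg, neg_add_rev, add_assoc, neg_add_cancel_left]

theorem addConj_star (g a c : B) : addConj g (a ∗ c) = -(a ∗ g) + a ∗ (g + c) := by
  simp only [addConj, star_add_right, sub_eq_add_neg, add_assoc, neg_add_cancel_left]

theorem starSet_univ_normal (X : Set B) : (starSet X Set.univ).Normal := by
  refine ⟨fun x hx g => ?_⟩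
  rw [← sub_eq_add_neg, ← addConj]
  induction hx using AddSubgroup.closure_induction with
  | mem y hy =>
    obtain ⟨a, ha, c, -, rfl⟩ := hy
    rw [addConj_star]
    exact add_mem (neg_mem (AddSubgroup.subset_closure (Set.mem_image2_of_mem ha trivial)))
      (AddSubgroup.subset_closure (Set.mem_image2_of_mem ha trivial))
  | zero => simp [addConj]
  | add y z _ _ hy hz => rw [addConj_add]; exact add_mem hy hz
  | neg y _ hy => rw [addConj_neg]; exact neg_mem hy

theorem star_mem_leftSeries_one (a b : B) : a ∗ b ∈ leftSeries B 1 :=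
  AddSubgroup.subset_closure (Set.mem_image2_of_mem trivial trivial)

theorem leftSeries_one_normal : (leftSeries B 1).Normal :=
  starSet_univ_normal _

theorem neg_add_addConj_mem_leftSeries_one {U : B} (hU : U ∈ leftSeries B 1) (c : B) :
    -c + addConj U c ∈ leftSeries B 1 := by
  simpa [addConj, sub_eq_add_neg, add_assoc] using
    add_mem (addConj_mem leftSeries_one_normal hU (-c)) (neg_mem hU)

theorem rightSeries_succ_normal (i : ℕ) : (rightSeries B (i + 1)).Normal :=
  starSet_univ_normal _

theorem star_mem_rightSeries_succ {v : B} {i : ℕ} (hv : v ∈ rightSeries B i) (e : B) :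
    v ∗ e ∈ rightSeries B (i + 1) :=
  AddSubgroup.subset_closure (Set.mem_image2_of_mem hv trivial)

theorem rightSeries_antitone : Antitone (rightSeries B) := by
  refine antitone_nat_of_succ_le fun i => ?_
  induction i with
  | zero => exact le_top
  | succ i ih =>
    refine (AddSubgroup.closure_le _).mpr ?_
    rintro - ⟨v, hv, e, -, rfl⟩
    exact star_mem_rightSeries_succ (ih hv) e

theorem rightSeries_succ_le_leftSeries_one (i : ℕ) : rightSeries B (i + 1) ≤ leftSeries B 1 :=
  (rightSeries_antitone (Nat.le_add_left 1 i)).trans <|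
    (AddSubgroup.closure_le _).mpr fun _ ⟨a, _, b, _, h⟩ => h ▸ star_mem_leftSeries_one a b

section UpperCentral

def upperCentral (B : Type*) [SkewBrace B] (n : ℕ) : AddSubgroup B :=
  (Subgroup.toAddSubgroup'
    (Subgroup.upperCentralSeries (Multiplicative (leftSeries B 1)) n)).map
    (leftSeries B 1).subtype

variable {n : ℕ}

theorem mem_upperCentral {x : B} : x ∈ upperCentral B n ↔ x ∈ upperCentralSet B n :=
  ⟨fun ⟨y, hy, hyx⟩ => hyx ▸ ⟨y.2, hy⟩, fun ⟨hx, h⟩ => ⟨⟨x, hx⟩, h, rfl⟩⟩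

theorem upperCentral_le_leftSeries_one : upperCentral B n ≤ leftSeries B 1 := by
  rintro - ⟨y, -, rfl⟩
  exact y.2

theorem upperCentral_eq_leftSeries_one
    (h : Subgroup.upperCentralSeries (Multiplicative (leftSeries B 1)) n = ⊤) :
    upperCentral B n = leftSeries B 1 := by
  refine le_antisymm upperCentral_le_leftSeries_one fun x hx => ⟨⟨x, hx⟩, ?_, rfl⟩
  rw [SetLike.mem_coe, Subgroup.mem_toAddSubgroup', h]
  exact Subgroup.mem_top _

theorem addConj_mem_upperCentral {x u : B} (hx : x ∈ upperCentral B n)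
    (hu : u ∈ leftSeries B 1) : addConj u x ∈ upperCentral B n := by
  obtain ⟨y, hy, rfl⟩ := hx
  refine ⟨⟨u, hu⟩ + y - ⟨u, hu⟩, ?_, rfl⟩
  rw [SetLike.mem_coe, Subgroup.mem_toAddSubgroup'] at hy ⊢
  simpa [sub_eq_add_neg] using
    (inferInstance : (Subgroup.upperCentralSeries _ n).Normal).conj_mem _ hy
      (Multiplicative.ofAdd ⟨u, hu⟩)

theorem add_sub_sub_mem_upperCentral {x u : B} (hx : x ∈ upperCentral B (n + 1))
    (hu : u ∈ leftSeries B 1) : x + u - x - u ∈ upperCentral B n := by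
  obtain ⟨y, hy, rfl⟩ := hx
  refine ⟨y + ⟨u, hu⟩ - y - ⟨u, hu⟩, ?_, rfl⟩
  rw [SetLike.mem_coe, Subgroup.mem_toAddSubgroup'] at hy ⊢
  simpa [sub_eq_add_neg, commutatorElement_def] using
    Subgroup.mem_upperCentralSeries_succ_iff.mp hy (Multiplicative.ofAdd ⟨u, hu⟩)

end UpperCentral

section CubeZero

variable (h3 : leftSeries B 2 = ⊥)
include h3

theorem star_eq_zero_of_mem (a : B) {z : B} (hz : z ∈ leftSeries B 1) : a ∗ z = 0 := by
  have h : a ∗ z ∈ leftSeries B 2 :=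
    AddSubgroup.subset_closure (Set.mem_image2_of_mem trivial hz)
  rwa [h3, AddSubgroup.mem_bot] at h

theorem mul_eq_add_of_mem (a : B) {z : B} (hz : z ∈ leftSeries B 1) : a * z = a + z := by
  rw [mul_eq_add_star_add, star_eq_zero_of_mem h3 a hz, add_zero]

theorem star_mul (x y c : B) : (x * y) ∗ c = y ∗ c + x ∗ c := by
  rw [star, mul_assoc, mul_eq_add_star_add y c, mul_add_compat, mul_add_compat,
    mul_eq_add_of_mem h3 x (star_mem_leftSeries_one y c)]
  simp only [star, sub_eq_add_neg, add_assoc, neg_add_cancel_left]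

theorem star_add_of_mem (x : B) {z : B} (hz : z ∈ leftSeries B 1) (d : B) :
    (x + z) ∗ d = z ∗ d + x ∗ d := by
  rw [← mul_eq_add_of_mem h3 x hz, star_mul h3]

theorem star_neg_of_mem {z : B} (hz : z ∈ leftSeries B 1) (d : B) : (-z) ∗ d = -(z ∗ d) := by
  have h := star_add_of_mem h3 (-z) hz d
  rw [neg_add_cancel, star_zero_left] at h
  exact (neg_eq_of_add_eq_zero_right h.symm).symm

theorem star_eq_star_of_neg_add_mem (v : B) {x y : B} (h : -x + y ∈ leftSeries B 1) :
    v ∗ y = v ∗ x := by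
  rw [← add_neg_cancel_left x y, star_add_right, star_eq_zero_of_mem h3 v h, add_zero,
    add_sub_cancel_right]

theorem star_addConj_of_mem {u w : B} (hu : u ∈ leftSeries B 1) (hw : w ∈ leftSeries B 1)
    (d : B) : addConj u w ∗ d = -(u ∗ d) + (w ∗ d + u ∗ d) := by
  have h : addConj u w = u * w * (-u) := by
    rw [mul_eq_add_of_mem h3 u hw, mul_eq_add_of_mem h3 _ (neg_mem hu), addConj, sub_eq_add_neg]
  rw [h, star_mul h3, star_mul h3, star_neg_of_mem h3 hu]

theorem star_star_of_mem {w : B} (hw : w ∈ leftSeries B 1) (e d : B) :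
    (w ∗ e) ∗ d = addConj e w ∗ d + (-e) ∗ d - w ∗ d - (-e) ∗ d := by
  have hconj : addConj e (w ∗ (-e)) = -(w ∗ e) := by
    rw [addConj_star, add_neg_cancel, star_zero_right, add_zero]
  have hprod : w * (-e) = -e + addConj e w + -(w ∗ e) := by
    rw [mul_eq_add_star_add, ← hconj]
    simp only [addConj, sub_eq_add_neg, add_assoc, neg_add_cancel_left]
  have h := star_mul h3 w (-e) d
  rw [hprod, star_add_of_mem h3 _ (neg_mem (star_mem_leftSeries_one w e)),
    star_add_of_mem h3 _ (addConj_mem leftSeries_one_normal hw e),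
    star_neg_of_mem h3 (star_mem_leftSeries_one w e), neg_add_eq_iff_eq_add] at h
  rw [eq_sub_of_add_eq h.symm]
  simp only [sub_eq_add_neg, neg_add_rev, add_assoc]

theorem addCommutator_star_of_neg_add_mem (v e : B) {x y : B} (h : -x + y ∈ leftSeries B 1) :
    addCommutator (v ∗ e) y = addCommutator (v ∗ e) x := by
  have h' : -(x + e) + (y + e) ∈ leftSeries B 1 := by
    simpa [addConj, sub_eq_add_neg, add_assoc] using addConj_mem leftSeries_one_normal h (-e)
  rw [addCommutator, addCommutator, addConj_star, addConj_star,
    star_eq_star_of_neg_add_mem h3 v h, star_eq_star_of_neg_add_mem h3 v h']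

end CubeZero

theorem star_mem_rightSeries_of_mem {v : B} {i : ℕ} (hv : v ∈ rightSeries B (i + 1)) (e : B) :
    v ∗ e ∈ rightSeries B (i + 1) :=
  rightSeries_antitone (Nat.le_succ _) (star_mem_rightSeries_succ hv e)

theorem ofAdd_addCommutator_mem_lowerCentralSeries {X : B} {j : ℕ}
    (hX : Multiplicative.ofAdd X ∈ (⊤ : Subgroup (Multiplicative B)).lowerCentralSeries j)
    (c : B) :
    Multiplicative.ofAdd (addCommutator X c) ∈
      (⊤ : Subgroup (Multiplicative B)).lowerCentralSeries (j + 1) := by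
  have h := Subgroup.commutator_mem_commutator (inv_mem hX) (Subgroup.mem_top (.ofAdd c))
  simpa [commutatorElement_def, addCommutator, addConj, sub_eq_add_neg, mul_assoc] using h

section Equiv

variable {n : ℕ}

def StarEquiv (n : ℕ) (X Y : B) : Prop :=
  ∀ d, -(Y ∗ d) + X ∗ d ∈ upperCentral B n

theorem StarEquiv.refl (X : B) : StarEquiv n X X := fun d => by simp

theorem StarEquiv.symm {X Y : B} (h : StarEquiv n X Y) : StarEquiv n Y X :=
  fun d => by simpa using neg_mem (h d)

theorem StarEquiv.trans {X Y Z : B} (h₁ : StarEquiv n X Y) (h₂ : StarEquiv n Y Z) :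
    StarEquiv n X Z :=
  fun d => by simpa [add_assoc] using add_mem (h₂ d) (h₁ d)

def CommEquiv (n : ℕ) : ℕ → B → B → Prop
  | 0 => StarEquiv n
  | s + 1 => fun X Y =>
      StarEquiv n X Y ∧ ∀ c, CommEquiv n s (addCommutator X c) (addCommutator Y c)

variable {s : ℕ}

theorem CommEquiv.refl (s : ℕ) (X : B) : CommEquiv n s X X := by
  induction s generalizing X with
  | zero => exact StarEquiv.refl X
  | succ s ih => exact ⟨StarEquiv.refl X, fun c => ih _⟩

theorem CommEquiv.symm {X Y : B} (h : CommEquiv n s X Y) : CommEquiv n s Y X := by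
  induction s generalizing X Y with
  | zero => exact StarEquiv.symm h
  | succ s ih => exact ⟨h.1.symm, fun c => ih (h.2 c)⟩

theorem CommEquiv.trans {X Y Z : B} (h₁ : CommEquiv n s X Y) (h₂ : CommEquiv n s Y Z) :
    CommEquiv n s X Z := by
  induction s generalizing X Y Z with
  | zero => exact StarEquiv.trans h₁ h₂
  | succ s ih => exact ⟨h₁.1.trans h₂.1, fun c => ih (h₁.2 c) (h₂.2 c)⟩

end Equiv

section Tower

variable {n q : ℕ}

structure IsCongruence (B : Type*) [SkewBrace B] (n q s : ℕ) : Prop where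
  add {X₁ Y₁ X₂ Y₂ : B} : X₁ ∈ rightSeries B (q + 1) → Y₁ ∈ rightSeries B (q + 1) →
    X₂ ∈ rightSeries B (q + 1) → Y₂ ∈ rightSeries B (q + 1) →
    CommEquiv n s X₁ Y₁ → CommEquiv n s X₂ Y₂ → CommEquiv n s (X₁ + X₂) (Y₁ + Y₂)
  conj {u W : B} : u ∈ leftSeries B 1 → W ∈ rightSeries B (q + 1) →
    CommEquiv n s (addConj u W) W

theorem IsCongruence.neg {s : ℕ} (hC : IsCongruence B n q s) {X Y : B}
    (hX : X ∈ rightSeries B (q + 1)) (hY : Y ∈ rightSeries B (q + 1))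
    (h : CommEquiv n s X Y) : CommEquiv n s (-X) (-Y) := by
  have h' := hC.add (add_mem (neg_mem hX) hY) (add_mem (neg_mem hX) hX) (neg_mem hY) (neg_mem hY)
    (hC.add (neg_mem hX) (neg_mem hX) hY hX (.refl s _) h.symm) (.refl s _)
  simpa using h'

variable (h3 : leftSeries B 2 = ⊥)
include h3

theorem starEquiv_add {X₁ Y₁ X₂ Y₂ : B} (hX₂ : X₂ ∈ leftSeries B 1) (hY₂ : Y₂ ∈ leftSeries B 1)
    (h₁ : StarEquiv n X₁ Y₁) (h₂ : StarEquiv n X₂ Y₂) : StarEquiv n (X₁ + X₂) (Y₁ + Y₂) := by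
  intro d
  rw [star_add_of_mem h3 _ hX₂, star_add_of_mem h3 _ hY₂]
  simpa [addConj, sub_eq_add_neg, add_assoc] using
    add_mem (addConj_mem_upperCentral (h₂ d) (neg_mem (star_mem_leftSeries_one Y₁ d))) (h₁ d)

/-- Exact for the generators `v ∗ e` of `B^{(q+2)}`, hence true up to `CommEquiv` on all of it. -/
theorem IsCongruence.addCommutator_addConj_right {s : ℕ} (hC : IsCongruence B n q s) {V U : B}
    (hV : V ∈ rightSeries B (q + 1)) (hU : U ∈ leftSeries B 1) (c : B) :
    CommEquiv n s (addCommutator V (addConj U c)) (addCommutator V c) := by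
  have hatom (v e : B) : addCommutator (v ∗ e) (addConj U c) = addCommutator (v ∗ e) c :=
    addCommutator_star_of_neg_add_mem h3 v e (neg_add_addConj_mem_leftSeries_one hU c)
  have hN := rightSeries_succ_normal (B := B) q
  have hmem {x y : B} (hx : x ∈ rightSeries B (q + 1)) (c' : B) :
      addConj (-y) (addCommutator x c') ∈ rightSeries B (q + 1) :=
    addConj_mem hN (addCommutator_mem hN hx c') _
  induction hV using AddSubgroup.closure_induction_left with
  | zero => simpa only [addCommutator_zero] using CommEquiv.refl s 0
  | add_left x hx y hy ih =>
    obtain ⟨v, hv, e, -, rfl⟩ := hx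
    have hve := star_mem_rightSeries_succ hv e
    rw [addCommutator_add, addCommutator_add, hatom]
    exact hC.add (hmem hve _) (hmem hve _) (addCommutator_mem hN hy _)
      (addCommutator_mem hN hy _) (.refl s _) ih
  | neg_add_cancel x hx y hy ih =>
    obtain ⟨v, hv, e, -, rfl⟩ := hx
    have hve := neg_mem (star_mem_rightSeries_succ hv e)
    rw [addCommutator_add, addCommutator_add, addCommutator_neg, addCommutator_neg, hatom,
      ← addCommutator_neg]
    exact hC.add (hmem hve _) (hmem hve _) (addCommutator_mem hN hy _)
      (addCommutator_mem hN hy _) (.refl s _) ih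

variable (hR : ∀ v ∈ rightSeries B (q + 1), ∀ d, v ∗ d ∈ upperCentral B (n + 1))
include hR

theorem starEquiv_addConj {u W : B} (hu : u ∈ leftSeries B 1) (hW : W ∈ rightSeries B (q + 1)) :
    StarEquiv n (addConj u W) W := by
  intro d
  rw [star_addConj_of_mem h3 hu (rightSeries_succ_le_leftSeries_one q hW)]
  simpa [sub_eq_add_neg, add_assoc] using
    add_sub_sub_mem_upperCentral (neg_mem (hR W hW d)) (neg_mem (star_mem_leftSeries_one u d))

/-- Since `u ∗ d` is central modulo `Z_n`, `star_star_of_mem` reduces `(u ∗ e) ∗ d` to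
`(e + u - e) ∗ d - u ∗ d`, the image of the commutator. -/
theorem starEquiv_star_addCommutator {u : B} (hu : u ∈ rightSeries B (q + 1)) (e : B) :
    StarEquiv n (u ∗ e) (addCommutator u e) := by
  intro d
  have hu₁ := rightSeries_succ_le_leftSeries_one q hu
  rw [star_star_of_mem h3 hu₁, addCommutator,
    star_add_of_mem h3 _ (addConj_mem leftSeries_one_normal hu₁ e), star_neg_of_mem h3 hu₁]
  simpa [sub_eq_add_neg, add_assoc] using
    add_sub_sub_mem_upperCentral (hR u hu d) (star_mem_leftSeries_one (-e) d)

theorem isCongruence_zero : IsCongruence B n q 0 where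
  add _ _ hX₂ hY₂ := starEquiv_add h3 (rightSeries_succ_le_leftSeries_one q hX₂)
    (rightSeries_succ_le_leftSeries_one q hY₂)
  conj hu hW := starEquiv_addConj h3 hR hu hW

theorem IsCongruence.succ {s : ℕ} (hC : IsCongruence B n q s) : IsCongruence B n q (s + 1) := by
  have hN := rightSeries_succ_normal (B := B) q
  have hB₂ := rightSeries_succ_le_leftSeries_one (B := B) q
  constructor
  · intro X₁ Y₁ X₂ Y₂ hX₁ hY₁ hX₂ hY₂ h₁ h₂
    refine ⟨starEquiv_add h3 (hB₂ hX₂) (hB₂ hY₂) h₁.1 h₂.1, fun c => ?_⟩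
    rw [addCommutator_add, addCommutator_add]
    have hX₁c := addCommutator_mem hN hX₁ c
    have hY₁c := addCommutator_mem hN hY₁ c
    refine hC.add (addConj_mem hN hX₁c _) (addConj_mem hN hY₁c _) (addCommutator_mem hN hX₂ c)
      (addCommutator_mem hN hY₂ c) ?_ (h₂.2 c)
    exact (hC.conj (neg_mem (hB₂ hX₂)) hX₁c).trans
      ((h₁.2 c).trans (hC.conj (neg_mem (hB₂ hY₂)) hY₁c).symm)
  · intro u W hu hW
    refine ⟨starEquiv_addConj h3 hR hu hW, fun c => ?_⟩
    rw [addCommutator_addConj]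
    refine (hC.conj hu (addCommutator_mem hN hW _)).trans ?_
    simpa [addConj, sub_eq_add_neg, add_assoc] using
      hC.addCommutator_addConj_right h3 hW (neg_mem hu) c

theorem isCongruence (s : ℕ) : IsCongruence B n q s := by
  induction s with
  | zero => exact isCongruence_zero h3 hR
  | succ s ih => exact ih.succ h3 hR

/-- Both sides expand as `-f e + (-f c + f (c + e))`, for `f = (u ∗ ·)` and
`f = addCommutator u`, so the induction hypothesis applies termwise. -/
theorem commEquiv_star_addCommutator (s : ℕ) {u : B} (hu : u ∈ rightSeries B (q + 1)) (e : B) :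
    CommEquiv n s (u ∗ e) (addCommutator u e) := by
  induction s generalizing e with
  | zero => exact starEquiv_star_addCommutator h3 hR hu e
  | succ s ih =>
    refine ⟨starEquiv_star_addCommutator h3 hR hu e, fun c => ?_⟩
    have hC := isCongruence h3 hR s
    have hN := rightSeries_succ_normal (B := B) q
    have hstar (e' : B) := star_mem_rightSeries_of_mem hu e'
    have hcomm (e' : B) := addCommutator_mem hN hu e'
    have h_star : addCommutator (u ∗ e) c = -(u ∗ e) + (-(u ∗ c) + u ∗ (c + e)) := by
      rw [addCommutator, addConj_star]
    have h_comm : addCommutator (addCommutator u e) c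
        = -addCommutator u e + (-addCommutator u c + addCommutator u (c + e)) := by
      rw [addCommutator_add_right, neg_add_cancel_left, addCommutator]
    rw [h_star, h_comm]
    exact hC.add (neg_mem (hstar e)) (neg_mem (hcomm e))
      (add_mem (neg_mem (hstar c)) (hstar _)) (add_mem (neg_mem (hcomm c)) (hcomm _))
      (hC.neg (hstar e) (hcomm e) (ih e))
      (hC.add (neg_mem (hstar c)) (neg_mem (hcomm c)) (hstar _) (hcomm _)
        (hC.neg (hstar c) (hcomm c) (ih c)) (ih _))

end Tower

section IteratedStar

variable {n : ℕ}

def IteratedStarMem (n : ℕ) : ℕ → B → Prop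
  | 0 => fun X => ∀ d, X ∗ d ∈ upperCentral B n
  | t + 1 => fun X => ∀ y, IteratedStarMem n t (X ∗ y)

theorem iteratedStarMem_zero (t : ℕ) : IteratedStarMem n t (0 : B) := by
  induction t with
  | zero => intro d; simp [star_zero_left]
  | succ t ih => intro y; rw [star_zero_left]; exact ih

variable (h3 : leftSeries B 2 = ⊥)
include h3

theorem IteratedStarMem.add {t : ℕ} {x y : B} (hy₁ : y ∈ leftSeries B 1)
    (hx : IteratedStarMem n t x) (hy : IteratedStarMem n t y) :
    IteratedStarMem n t (x + y) := by
  induction t generalizing x y with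
  | zero => intro d; rw [star_add_of_mem h3 x hy₁]; exact add_mem (hy d) (hx d)
  | succ t ih =>
    intro c
    rw [star_add_of_mem h3 x hy₁]
    exact ih (star_mem_leftSeries_one x c) (hy c) (hx c)

theorem IteratedStarMem.neg {t : ℕ} {x : B} (hx : x ∈ leftSeries B 1) (h : IteratedStarMem n t x) :
    IteratedStarMem n t (-x) := by
  induction t generalizing x with
  | zero => intro d; rw [star_neg_of_mem h3 hx]; exact neg_mem (h d)
  | succ t ih =>
    intro y
    rw [star_neg_of_mem h3 hx]
    exact ih (star_mem_leftSeries_one x y) (h y)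

theorem iteratedStarMem_of_mem_rightSeries {q t j : ℕ}
    (h : ∀ v ∈ rightSeries B (q + 1), IteratedStarMem n (t + j) v) :
    ∀ v ∈ rightSeries B (q + 1 + j), IteratedStarMem n t v := by
  induction j generalizing t with
  | zero => exact h
  | succ j ih =>
    have h' (v : B) (hv : v ∈ rightSeries B (q + 1)) : IteratedStarMem n (t + 1 + j) v := by
      rw [Nat.add_right_comm]
      exact h v hv
    intro v hv
    have hv' : v ∈ AddSubgroup.closure
        (Set.image2 star (rightSeries B (q + 1 + j) : Set B) Set.univ) := hv
    clear hv
    induction hv' using AddSubgroup.closure_induction with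
    | mem x hx =>
      obtain ⟨w, hw, e, -, rfl⟩ := hx
      exact ih h' w hw e
    | zero => exact iteratedStarMem_zero t
    | add x y _ hy hx' hy' =>
      exact hx'.add h3 (rightSeries_succ_le_leftSeries_one (q + 1 + j) hy) hy'
    | neg x hx hx' => exact hx'.neg h3 (rightSeries_succ_le_leftSeries_one (q + 1 + j) hx)

variable {q : ℕ} (hR : ∀ v ∈ rightSeries B (q + 1), ∀ d, v ∗ d ∈ upperCentral B (n + 1))
include hR

theorem IteratedStarMem.of_commEquiv {t : ℕ} {X Y : B} (hX : X ∈ rightSeries B (q + 1))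
    (hY : Y ∈ rightSeries B (q + 1)) (h : CommEquiv n t X Y) (hY' : IteratedStarMem n t Y) :
    IteratedStarMem n t X := by
  induction t generalizing X Y with
  | zero => intro d; simpa using add_mem (hY' d) (h d)
  | succ t ih =>
    intro y
    exact ih (star_mem_rightSeries_of_mem hX y) (star_mem_rightSeries_of_mem hY y)
      ((commEquiv_star_addCommutator h3 hR t hX y).trans
        ((h.2 y).trans (commEquiv_star_addCommutator h3 hR t hY y).symm)) (hY' y)

/-- `X ∗ y` agrees with `addCommutator X y`, which lies one step further down the lower central
series. -/
theorem iteratedStarMem_of_mem_lowerCentralSeries {m : ℕ}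
    (hm : (⊤ : Subgroup (Multiplicative B)).lowerCentralSeries m = ⊥) (t : ℕ) {X : B}
    (hX : X ∈ rightSeries B (q + 1))
    (hX' : Multiplicative.ofAdd X ∈ (⊤ : Subgroup (Multiplicative B)).lowerCentralSeries (m - t)) :
    IteratedStarMem n t X := by
  induction t generalizing X with
  | zero =>
    rw [Nat.sub_zero, hm, Subgroup.mem_bot] at hX'
    rw [show X = 0 from hX']
    exact iteratedStarMem_zero 0
  | succ t ih =>
    intro y
    have hXy := addCommutator_mem (rightSeries_succ_normal q) hX y
    refine IteratedStarMem.of_commEquiv h3 hR (star_mem_rightSeries_of_mem hX y) hXy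
      (commEquiv_star_addCommutator h3 hR t hX y) (ih hXy ?_)
    exact Subgroup.lowerCentralSeries_antitone _ (by omega)
      (ofAdd_addCommutator_mem_lowerCentralSeries hX' y)

end IteratedStar

theorem rightSeries_add_subset_Sset (h3 : leftSeries B 2 = ⊥) {m n q : ℕ}
    (hm : (⊤ : Subgroup (Multiplicative B)).lowerCentralSeries m = ⊥)
    (hR : (rightSeries B (q + 1) : Set B) ⊆ Sset B (n + 1)) :
    (rightSeries B (q + 1 + m) : Set B) ⊆ Sset B n := by
  have hR' (v : B) (hv : v ∈ rightSeries B (q + 1)) (d : B) : v ∗ d ∈ upperCentral B (n + 1) :=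
    mem_upperCentral.mpr ((hR hv).2 d)
  have hm' (v : B) (hv : v ∈ rightSeries B (q + 1)) : IteratedStarMem n (0 + m) v :=
    iteratedStarMem_of_mem_lowerCentralSeries h3 hR' hm _ hv (by simp)
  intro v hv
  refine ⟨rightSeries_succ_le_leftSeries_one (q + m) ?_, fun d => ?_⟩
  · rwa [Nat.add_right_comm] at hv
  · exact mem_upperCentral.mp (iteratedStarMem_of_mem_rightSeries h3 hm' v hv d)

end SkewBrace

open SkewBrace in
/-- If `B³ = 0`, `(B,+)` is nilpotent of class `m` and `(B²,+)` is nilpotent of class `r`,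
then `B^{(2+m·k)} ⊆ S_{r-k}` for every `1 ≤ k ≤ r`.
(`rightSeries B n = B^{(n+1)}`, so `B^{(2+m·k)} = rightSeries B (1 + m * k)`.) -/
theorem rightSeries_subset_Sset (B : Type*) [SkewBrace B] (m r : ℕ)
    [Group.IsNilpotent (Multiplicative B)]
    (hm : Group.nilpotencyClass (Multiplicative B) = m)
    [Group.IsNilpotent (Multiplicative ↥(leftSeries B 1))]
    (hr : Group.nilpotencyClass (Multiplicative ↥(leftSeries B 1)) = r)
    (h3 : leftSeries B 2 = ⊥) :
    ∀ k : ℕ, 1 ≤ k → k ≤ r →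
      (rightSeries B (1 + m * k) : Set B) ⊆ Sset B (r - k) := by
  have hbot : (⊤ : Subgroup (Multiplicative B)).lowerCentralSeries m = ⊥ :=
    hm ▸ Subgroup.lowerCentralSeries_nilpotencyClass
  have hZr : upperCentral B r = leftSeries B 1 :=
    upperCentral_eq_leftSeries_one (hr ▸ Subgroup.upperCentralSeries_nilpotencyClass)
  have key (k : ℕ) (hk : k ≤ r) : (rightSeries B (1 + m * k) : Set B) ⊆ Sset B (r - k) := by
    induction k with
    | zero =>
      intro v hv
      refine ⟨rightSeries_succ_le_leftSeries_one 0 (by simpa using hv),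
        fun d => mem_upperCentral.mp ?_⟩
      simpa [hZr] using star_mem_leftSeries_one v d
    | succ k ih =>
      have hstep := rightSeries_add_subset_Sset h3 hbot (q := m * k) (n := r - (k + 1))
        (by rw [show r - (k + 1) + 1 = r - k by omega, Nat.add_comm (m * k)]; exact ih (by omega))
      rwa [show m * k + 1 + m = 1 + m * (k + 1) by ring] at hstep
  exact fun k _ hk => key k hk
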